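/- Let L ∈ R[x][∂] have positive order and be R-primitive, and let p be a non-unit element of R dividing lc_∂(L). Then p is non-removable from L: there is no operator P ∈ Q_R(x)[∂] of any order k such that PL ∈ R[x][∂] and σ^{-k}(lc_∂(PL)) = (w/(vp))·lc_∂(L) with w, v ∈ R[x] and gcd(p, w) = 1. -/

import Mathlib

open Polynomial

noncomputable section

/-- `Q_R(x)`, the field of rational functions over the fraction field `Q_R` of `R`,
realized as the fraction field of `R[x]`. -/
abbrev QX (R : Type) [CommRing R] [IsDomain R] := FractionRing (Polynomial R)

/-- Data of an Ore algebra `R[x][∂; σ, δ] ⊆ Q_R(x)[∂; σ, δ]`.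
The ring `A` plays the role of `Q_R(x)[∂]`; `ι` embeds the coefficient field,
`D` is the Ore variable `∂`, subject to the commutation rule `∂·p = σ(p)·∂ + δ(p)`,
and every element of `A` has a unique finite coefficient expansion `Σ ι(cᵢ)·∂^i`. -/
structure OreAlg (R : Type) [CommRing R] [IsDomain R] (A : Type) [Ring A] where
  σ : Polynomial R ≃+* Polynomial R
  σ_fix : ∀ r : R, σ (C r) = C r
  δ : Polynomial R → Polynomial R
  δ_add : ∀ f g, δ (f + g) = δ f + δ g
  δ_linear : ∀ (r : R) (f), δ (C r * f) = C r * δ f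
  ι : QX R →+* A
  ι_inj : Function.Injective ι
  D : A
  comm_rule : ∀ p : Polynomial R,
    D * ι (algebraMap (Polynomial R) (QX R) p)
      = ι (algebraMap (Polynomial R) (QX R) (σ p)) * D
        + ι (algebraMap (Polynomial R) (QX R) (δ p))
  δ_leibniz : ∀ f g, δ (f * g) = σ f * δ g + δ f * g
  coeff : A → ℕ → QX R
  coeff_inj : ∀ P Q : A, (∀ i, coeff P i = coeff Q i) → P = Q
  coeff_add : ∀ P Q i, coeff (P + Q) i = coeff P i + coeff Q i
  coeff_smul : ∀ (f : QX R) (P : A) (i), coeff (ι f * P) i = f * coeff P i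
  coeff_bdd : ∀ P : A, ∃ N, ∀ i, N < i → coeff P i = 0
  coeff_mk : ∀ (N : ℕ) (c : ℕ → QX R), (∀ i, N < i → c i = 0) →
    ∀ j, coeff (∑ i ∈ Finset.range (N + 1), ι (c i) * D ^ i) j = c j

namespace OreAlg

variable {R : Type} [CommRing R] [IsDomain R] {A : Type} [Ring A] (O : OreAlg R A)

/-- The embedding of `R[x]` into the Ore algebra. -/
def ιp (f : Polynomial R) : A := O.ι (algebraMap (Polynomial R) (QX R) f)

/-- The `i`-th `∂`-coefficient of `P` lies in `R[x]`. -/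
def PolyCoeff (P : A) (i : ℕ) : Prop :=
  ∃ f : Polynomial R, O.coeff P i = algebraMap (Polynomial R) (QX R) f

/-- `P` belongs to the subring `R[x][∂]` of `Q_R(x)[∂]`. -/
def InB (P : A) : Prop := ∀ i, O.PolyCoeff P i

/-- The order (degree in `∂`) of an operator. -/
def ord (P : A) : ℕ := sSup {i | O.coeff P i ≠ 0}

/-- The leading coefficient (with respect to `∂`), in `Q_R(x)`. -/
def lc (P : A) : QX R := O.coeff P (O.ord P)

/-- The contraction ideal `cont(L) = Q_R(x)[∂]·L ∩ R[x][∂]`. -/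
def cont (L : A) : Set A := {P | O.InB P ∧ ∃ Q : A, P = Q * L}

/-- The `k`-th submodule `M_k(L) = {P ∈ cont(L) : deg_∂ P ≤ k}`. -/
def M (L : A) (k : ℕ) : Set A := {P | P ∈ O.cont L ∧ O.ord P ≤ k}

/-- The `k`-th coefficient ideal `I_k = {[∂^k]P : P ∈ M_k} ∪ {0}` (as a set of
polynomials; `0` arises from `P = 0`). -/
def Icoeff (L : A) (k : ℕ) : Set (Polynomial R) :=
  {f | ∃ P ∈ O.M L k, O.coeff P k = algebraMap (Polynomial R) (QX R) f}

end OreAlg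

/-- `gcd(p, w) = 1` in `R[x]`: every common divisor is a unit. -/
def Copr {R : Type} [CommRing R] (p w : Polynomial R) : Prop :=
  ∀ d : Polynomial R, d ∣ p → d ∣ w → IsUnit d

namespace OreAlg

variable {R : Type} [CommRing R] [IsDomain R] {A : Type} [Ring A] (O : OreAlg R A)

/-- `P` is a `p`-removing operator for `L` over `R[x]`, of order `k`:
`P·L ∈ R[x][∂]` and `σ^{-k}(lc_∂(P·L)) = (w/(v·p))·lc_∂(L)` with `gcd(p, w) = 1`. -/
def IsRemoving (L : A) (p : Polynomial R) (k : ℕ) (P : A) : Prop :=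
  O.ord P = k ∧ O.InB (P * L) ∧
  ∃ w v t l : Polynomial R, v ≠ 0 ∧ Copr p w ∧
    O.lc (P * L) = algebraMap (Polynomial R) (QX R) t ∧
    O.lc L = algebraMap (Polynomial R) (QX R) l ∧
    (⇑O.σ.symm)^[k] t * (v * p) = w * l

/-- `p` is removable from `L` (at some order). -/
def Removable (L : A) (p : Polynomial R) : Prop :=
  ∃ k P, O.IsRemoving L p k P

/-- Factorization data for `lc_∂(L) = c·p₁^{e₁}⋯p_m^{e_m}`, with `c ∈ R` and the
`pᵢ ∈ R[x] \ R` irreducible and pairwise coprime; `L` has order `r > 0`. -/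
def Factored (L : A) (r m : ℕ) (c : R) (p : Fin m → Polynomial R)
    (e : Fin m → ℕ) : Prop :=
  O.ord L = r ∧ 0 < r ∧ c ≠ 0 ∧
  O.lc L = algebraMap (Polynomial R) (QX R) (C c * ∏ i, p i ^ e i) ∧
  (∀ i, Irreducible (p i) ∧ 0 < (p i).natDegree) ∧
  (∀ i j, i ≠ j → Copr (p i) (p j))

/-- `T` is a desingularized operator for `L`: `T ∈ cont(L)` and
`σ^{r-k}(lc_∂(T)) = (a/(b·∏ pᵢ^{kᵢ}))·lc_∂(L)` with `a, b ∈ R`, where each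
`pᵢ^{dᵢ}` with `dᵢ > kᵢ` is non-removable from `L`. -/
def Desing (L : A) (r m : ℕ) (c : R) (p : Fin m → Polynomial R)
    (e : Fin m → ℕ) (T : A) : Prop :=
  T ∈ O.cont L ∧ r ≤ O.ord T ∧
  ∃ (a b : R) (k : Fin m → ℕ) (t l : Polynomial R),
    b ≠ 0 ∧ (∀ i, k i ≤ e i) ∧
    O.lc T = algebraMap (Polynomial R) (QX R) t ∧
    O.lc L = algebraMap (Polynomial R) (QX R) l ∧
    (⇑O.σ.symm)^[O.ord T - r] t * (C b * ∏ i, p i ^ k i) = C a * l ∧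
    (∀ i (d : ℕ), k i < d → ¬ O.Removable L (p i ^ d))

/-- The left ideal of `R[x][∂]` generated by a set `S ⊆ R[x][∂]`. -/
def LIdeal (S : Set A) : Set A :=
  {P | ∃ (n : ℕ) (co s : Fin n → A), (∀ i, O.InB (co i)) ∧ (∀ i, s i ∈ S) ∧
    P = ∑ i, co i * s i}

/-- The constant `a ∈ R` viewed inside the Ore algebra. -/
def cst (a : R) : A := O.ιp (C a)

/-- The saturation `I : a^∞ = {P ∈ R[x][∂] : aⁱ·P ∈ I for some i}`. -/
def sat (I : Set A) (a : R) : Set A :=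
  {P | O.InB P ∧ ∃ i : ℕ, O.cst a ^ i * P ∈ I}

end OreAlg

/-!
Clear denominators: `g • P = Σ bᵢ ∂ⁱ` with `g, bᵢ ∈ R[x]`, and pick a prime `π ∈ R` dividing `p`.
Since `σ` and `δ` are `R`-linear, the coefficients of `∂ⁱ L` modulo `π` are controlled by those
of `L`, which gives a Gauss lemma: as `L` is `π`-primitive, `πᵉ` divides all `bᵢ` as soon as it
divides all coefficients of `(Σ bᵢ ∂ⁱ) L = g • P L`, in particular when `πᵉ ∣ g`. Comparing leading
coefficients, `g · lc(PL) = bₖ σᵏ(lc L)`, so `v_π(lc(PL)) ≥ v_π(lc L)`. But the removing equation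
`σ⁻ᵏ(lc(PL)) · v · p = w · lc L` with `π ∣ p` and `π ∤ w` forces `v_π(lc(PL)) < v_π(lc L)`.
-/

lemma exists_greatest_not_dvd {M : Type*} [MonoidWithZero M] {a : M} {u : ℕ → M} {N : ℕ}
    (hu : ∀ j, N < j → u j = 0) (hne : ∃ j, ¬ a ∣ u j) :
    ∃ J, ¬ a ∣ u J ∧ ∀ j, J < j → a ∣ u j := by
  classical
  obtain ⟨j₀, hj₀⟩ := hne
  have hj₀N : j₀ ≤ N := not_lt.mp fun h => hj₀ (by rw [hu j₀ h]; exact dvd_zero a)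
  refine ⟨Nat.findGreatest (fun j => ¬ a ∣ u j) N,
    Nat.findGreatest_spec (P := fun j => ¬ a ∣ u j) hj₀N hj₀, fun j hj => ?_⟩
  by_cases hjN : j ≤ N
  · exact not_not.mp (Nat.findGreatest_is_greatest hj hjN)
  · rw [hu j (by omega)]
    exact dvd_zero a

/-- If `g t = b s` and `v_π(g) ≤ v_π(b)`, then `v_π(t) ≥ v_π(s)`; then `t v p = w s` with `π ∣ p`
forces `π ∣ w`. -/
lemma Prime.dvd_of_mul_eq_mul {M : Type*} [CommMonoidWithZero M] [IsCancelMulZero M]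
    [WfDvdMonoid M] {π g b t s v p w : M} (hπ : Prime π) (hg : g ≠ 0)
    (hgb : ∀ e, π ^ e ∣ g → π ^ e ∣ b) (hs : s ≠ 0) (hlead : g * t = b * s) (hrem : t * (v * p) = w * s) (hp : π ∣ p) : π ∣ w := by
  obtain ⟨g', hg', hπg'⟩ :=
    (FiniteMultiplicity.of_not_isUnit hπ.not_isUnit hg).exists_eq_pow_mul_and_not_dvd
  generalize multiplicity π g = m at hg'
  subst hg'
  obtain ⟨b', rfl⟩ := hgb m (dvd_mul_right _ _)
  rw [mul_assoc, mul_assoc] at hlead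
  have hlead' := mul_left_cancel₀ (pow_ne_zero _ hπ.ne_zero) hlead
  have hb' : s * (b' * (v * p)) = s * (g' * w) := by
    calc s * (b' * (v * p)) = (b' * s) * (v * p) := by ac_rfl
      _ = g' * (t * (v * p)) := by rw [← hlead', mul_assoc]
      _ = s * (g' * w) := by rw [hrem]; ac_rfl
  have hdvd : π ∣ g' * w :=
    mul_left_cancel₀ hs hb' ▸ dvd_mul_of_dvd_right (dvd_mul_of_dvd_right hp v) b'
  exact (hπ.dvd_or_dvd hdvd).resolve_left hπg'

namespace OreAlg

variable {R : Type} [CommRing R] [IsDomain R] {A : Type} [Ring A] (O : OreAlg R A)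

local notation "φ" => algebraMap R[X] (QX R)

def coeffAddHom (j : ℕ) : A →+ QX R := AddMonoidHom.mk' (O.coeff · j) (O.coeff_add · · j)

lemma coeff_zero (j : ℕ) : O.coeff 0 j = 0 := map_zero (O.coeffAddHom j)

lemma coeff_sum (s : Finset ℕ) (f : ℕ → A) (j : ℕ) :
    O.coeff (∑ i ∈ s, f i) j = ∑ i ∈ s, O.coeff (f i) j :=
  map_sum (O.coeffAddHom j) f s

lemma bddAbove_support (P : A) : BddAbove {i | O.coeff P i ≠ 0} := by
  obtain ⟨N, hN⟩ := O.coeff_bdd P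
  exact ⟨N, fun i hi => not_lt.mp fun h => hi (hN i h)⟩

lemma coeff_eq_zero_of_ord_lt {P : A} {j : ℕ} (h : O.ord P < j) : O.coeff P j = 0 :=
  not_not.mp fun hj => (le_csSup (O.bddAbove_support P) hj).not_gt h

lemma lc_ne_zero {P : A} (hP : P ≠ 0) : O.lc P ≠ 0 := by
  have hne : {i | O.coeff P i ≠ 0}.Nonempty := by
    by_contra h
    refine hP (O.coeff_inj P 0 fun i => ?_)
    rw [O.coeff_zero]
    exact not_not.mp fun hi => h ⟨i, hi⟩
  exact Nat.sSup_mem hne (O.bddAbove_support P)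

lemma ord_eq_of_coeff {P : A} {n : ℕ} (hn : O.coeff P n ≠ 0)
    (hgt : ∀ j, n < j → O.coeff P j = 0) : O.ord P = n :=
  le_antisymm (csSup_le ⟨n, hn⟩ fun _ hj => not_lt.mp fun h => hj (hgt _ h))
    (le_csSup (O.bddAbove_support P) hn)

lemma eq_sum_range (P : A) {N : ℕ} (h : ∀ j, N < j → O.coeff P j = 0) :
    P = ∑ i ∈ Finset.range (N + 1), O.ι (O.coeff P i) * O.D ^ i :=
  O.coeff_inj _ _ fun j => (O.coeff_mk N _ h j).symm

lemma coeff_D_pow (i j : ℕ) : O.coeff (O.D ^ i) j = if j = i then 1 else 0 := by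
  have h := O.coeff_mk i (fun n => if n = i then 1 else 0) (fun n hn => if_neg hn.ne') j
  simp only [apply_ite O.ι, map_one, map_zero, ite_mul, one_mul, zero_mul,
    Finset.sum_ite_eq', Finset.self_mem_range_succ, if_true] at h
  exact h

lemma coeff_ι_mul_D_pow (c : QX R) (i j : ℕ) :
    O.coeff (O.ι c * O.D ^ i) j = if j = i then c else 0 := by
  rw [O.coeff_smul, O.coeff_D_pow, mul_ite, mul_one, mul_zero]

/-- The coefficient sequence of `∂ · Q`, for `Q` with coefficient sequence `u`. -/
def dMulCoeff (u : ℕ → R[X]) : ℕ → R[X]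
  | 0 => O.δ (u 0)
  | j + 1 => O.σ (u j) + O.δ (u (j + 1))

lemma coeff_D_mul {Q : A} {u : ℕ → R[X]} (hu : ∀ j, O.coeff Q j = φ (u j)) (j : ℕ) :
    O.coeff (O.D * Q) j = φ (O.dMulCoeff u j) := by
  obtain ⟨N, hN⟩ := O.coeff_bdd Q
  have hQ := O.eq_sum_range Q (N := N + j) fun i hi => hN i (by omega)
  have hterm : ∀ i, O.D * (O.ι (φ (u i)) * O.D ^ i)
      = O.ι (φ (O.σ (u i))) * O.D ^ (i + 1) + O.ι (φ (O.δ (u i))) * O.D ^ i := by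
    intro i
    rw [← mul_assoc, O.comm_rule, add_mul, mul_assoc, ← pow_succ']
  simp_rw [hu] at hQ
  rw [hQ, Finset.mul_sum, O.coeff_sum]
  simp_rw [hterm, O.coeff_add, O.coeff_ι_mul_D_pow]
  rw [Finset.sum_add_distrib, Finset.sum_ite_eq]
  cases j with
  | zero => simp [dMulCoeff]
  | succ j =>
    have hj : j ∈ Finset.range (N + (j + 1) + 1) := Finset.mem_range.mpr (by omega)
    simp [dMulCoeff, Finset.sum_ite_eq, hj]

lemma coeff_D_pow_mul {Q : A} {u : ℕ → R[X]} (hu : ∀ j, O.coeff Q j = φ (u j)) (i j : ℕ) :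
    O.coeff (O.D ^ i * Q) j = φ (O.dMulCoeff^[i] u j) := by
  induction i generalizing j with
  | zero => simpa using hu j
  | succ i ih => rw [pow_succ', mul_assoc, O.coeff_D_mul ih, Function.iterate_succ_apply']

lemma coeff_mul {L : A} {u : ℕ → R[X]} (hu : ∀ j, O.coeff L j = φ (u j)) (P : A) (j : ℕ) :
    O.coeff (P * L) j
      = ∑ i ∈ Finset.range (O.ord P + 1), O.coeff P i * φ (O.dMulCoeff^[i] u j) := by
  conv_lhs => rw [O.eq_sum_range P fun _ => O.coeff_eq_zero_of_ord_lt, Finset.sum_mul]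
  simp_rw [O.coeff_sum, mul_assoc, O.coeff_smul, O.coeff_D_pow_mul hu]

lemma iterate_σ_mul (k : ℕ) (f g : R[X]) :
    (⇑O.σ)^[k] (f * g) = (⇑O.σ)^[k] f * (⇑O.σ)^[k] g := by
  rw [← RingAut.coe_pow, map_mul]

lemma iterate_σ_C (k : ℕ) (a : R) : (⇑O.σ)^[k] (C a) = C a :=
  Function.iterate_fixed (O.σ_fix a) k

lemma iterate_σ_ne_zero {k : ℕ} {f : R[X]} (hf : f ≠ 0) : (⇑O.σ)^[k] f ≠ 0 := by
  rwa [← RingAut.coe_pow, map_ne_zero_iff _ (O.σ ^ k).injective]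

lemma C_dvd_σ_iff {a : R} {f : R[X]} : C a ∣ O.σ f ↔ C a ∣ f := by
  conv_rhs => rw [← map_dvd_iff O.σ, O.σ_fix]

lemma C_dvd_iterate_σ_iff {a : R} {f : R[X]} (k : ℕ) : C a ∣ (⇑O.σ)^[k] f ↔ C a ∣ f := by
  induction k with
  | zero => rfl
  | succ k ih => rw [Function.iterate_succ_apply', O.C_dvd_σ_iff, ih]

lemma C_dvd_δ {a : R} {f : R[X]} (h : C a ∣ f) : C a ∣ O.δ f := by
  obtain ⟨g, rfl⟩ := h
  exact ⟨O.δ g, O.δ_linear a g⟩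

lemma C_dvd_iterate_dMulCoeff {a : R} {u : ℕ → R[X]} {J : ℕ} (hu : ∀ j, J < j → C a ∣ u j)
    (i : ℕ) : (∀ j, J + i < j → C a ∣ O.dMulCoeff^[i] u j) ∧
      C a ∣ O.dMulCoeff^[i] u (J + i) - (⇑O.σ)^[i] (u J) := by
  induction i with
  | zero => simpa using hu
  | succ i ih =>
    obtain ⟨hgt, htop⟩ := ih
    simp only [Function.iterate_succ_apply']
    refine ⟨fun j hj => ?_, ?_⟩
    · obtain ⟨j, rfl⟩ : ∃ j', j = j' + 1 := ⟨j - 1, by omega⟩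
      exact dvd_add (O.C_dvd_σ_iff.mpr (hgt j (by omega))) (O.C_dvd_δ (hgt _ (by omega)))
    · have hsplit : O.dMulCoeff (O.dMulCoeff^[i] u) (J + i + 1) - O.σ ((⇑O.σ)^[i] (u J))
          = O.σ (O.dMulCoeff^[i] u (J + i) - (⇑O.σ)^[i] (u J))
            + O.δ (O.dMulCoeff^[i] u (J + i + 1)) := by
        rw [map_sub, dMulCoeff]; ring
      rw [← add_assoc, hsplit]
      exact dvd_add (O.C_dvd_σ_iff.mpr htop) (O.C_dvd_δ (hgt _ (by omega)))

lemma iterate_dMulCoeff_of_vanish {u : ℕ → R[X]} {r : ℕ} (hu : ∀ j, r < j → u j = 0) (i : ℕ) :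
    (∀ j, r + i < j → O.dMulCoeff^[i] u j = 0) ∧
      O.dMulCoeff^[i] u (r + i) = (⇑O.σ)^[i] (u r) := by
  simpa [sub_eq_zero] using
    O.C_dvd_iterate_dMulCoeff (a := 0) (fun j hj => by simp [hu j hj]) i

lemma lc_mul {L : A} (hL : L ≠ 0) {u : ℕ → R[X]} (hu : ∀ j, O.coeff L j = φ (u j)) (P : A) :
    O.lc (P * L) = O.lc P * φ ((⇑O.σ)^[O.ord P] (u (O.ord L))) := by
  by_cases hP : P = 0
  · simp [lc, hP, O.coeff_zero]
  have hvan : ∀ j, O.ord L < j → u j = 0 := fun j hj =>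
    IsFractionRing.injective R[X] (QX R) (by rw [← hu, O.coeff_eq_zero_of_ord_lt hj, map_zero])
  have hur : u (O.ord L) ≠ 0 := fun h => O.lc_ne_zero hL (by rw [lc, hu, h, map_zero])
  have hgt : ∀ j, O.ord L + O.ord P < j → O.coeff (P * L) j = 0 := fun j hj =>
    (O.coeff_mul hu P j).trans <| Finset.sum_eq_zero fun i hi => by
      rw [(O.iterate_dMulCoeff_of_vanish hvan i).1 j (by rw [Finset.mem_range] at hi; omega), map_zero, mul_zero]
  have htop : O.coeff (P * L) (O.ord L + O.ord P)
      = O.lc P * φ ((⇑O.σ)^[O.ord P] (u (O.ord L))) := by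
    rw [O.coeff_mul hu, Finset.sum_eq_single_of_mem _ (Finset.self_mem_range_succ _),
      (O.iterate_dMulCoeff_of_vanish hvan _).2, lc]
    intro i hi hne
    rw [(O.iterate_dMulCoeff_of_vanish hvan i).1 _ (by rw [Finset.mem_range] at hi; omega), map_zero, mul_zero]
  have hne : O.lc P * φ ((⇑O.σ)^[O.ord P] (u (O.ord L))) ≠ 0 :=
    mul_ne_zero (O.lc_ne_zero hP) <| (map_ne_zero_iff _ (IsFractionRing.injective R[X] (QX R))).mpr
      (O.iterate_σ_ne_zero hur)
  rw [lc, O.ord_eq_of_coeff (htop ▸ hne) hgt, htop]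

lemma exists_integer_multiples_coeff (P : A) :
    ∃ g : R[X], g ≠ 0 ∧ ∃ b : ℕ → R[X], ∀ i, φ (b i) = φ g * O.coeff P i := by
  obtain ⟨N, hN⟩ := O.coeff_bdd P
  obtain ⟨g, hg⟩ := IsLocalization.exist_integer_multiples (nonZeroDivisors R[X])
    (Finset.range (N + 1)) (O.coeff P)
  have hint : ∀ i, IsLocalization.IsInteger R[X] ((g : R[X]) • O.coeff P i) := by
    intro i
    by_cases hi : i ∈ Finset.range (N + 1)
    · exact hg i hi
    · rw [hN i (by simpa using hi), smul_zero]
      exact ⟨0, map_zero _⟩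
  choose b hb using hint
  exact ⟨g, nonZeroDivisors.coe_ne_zero g, b, fun i => by rw [hb, Algebra.smul_def]⟩

variable {q : R} {u : ℕ → R[X]} {J : ℕ}

/-- Gauss's lemma modulo a prime constant, for `(Σ_{i<n} bᵢ ∂ⁱ) L` with `L` of coefficients `u`. -/
lemma C_dvd_of_C_dvd_sum (hq : Prime q) (hJ : ¬ C q ∣ u J) (hu : ∀ j, J < j → C q ∣ u j)
    (b : ℕ → R[X]) (n : ℕ)
    (h : ∀ j, C q ∣ ∑ i ∈ Finset.range n, b i * O.dMulCoeff^[i] u j) : ∀ i < n, C q ∣ b i := by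
  induction n with
  | zero => simp
  | succ n ih =>
    simp only [Finset.sum_range_succ] at h
    have hlow : C q ∣ ∑ i ∈ Finset.range n, b i * O.dMulCoeff^[i] u (J + n) :=
      Finset.dvd_sum fun i hi => dvd_mul_of_dvd_right
        ((O.C_dvd_iterate_dMulCoeff hu i).1 _ (by rw [Finset.mem_range] at hi; omega)) _
    have hbn : C q ∣ b n := by
      refine ((prime_C_iff.mpr hq).dvd_or_dvd ((dvd_add_right hlow).mp (h (J + n)))).resolve_right
        fun hd => hJ ((O.C_dvd_iterate_σ_iff n).mp ?_)
      exact (dvd_sub_right hd).mp (O.C_dvd_iterate_dMulCoeff hu n).2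
    intro i hi
    rcases Nat.lt_succ_iff_lt_or_eq.mp hi with hi | rfl
    · exact ih (fun j => (dvd_add_left (dvd_mul_of_dvd_left hbn _)).mp (h j)) i hi
    · exact hbn

lemma C_pow_dvd_of_C_pow_dvd_sum (hq : Prime q) (hJ : ¬ C q ∣ u J)
    (hu : ∀ j, J < j → C q ∣ u j) (b : ℕ → R[X]) (n e : ℕ)
    (h : ∀ j, C q ^ e ∣ ∑ i ∈ Finset.range n, b i * O.dMulCoeff^[i] u j) :
    ∀ i < n, C q ^ e ∣ b i := by
  induction e with
  | zero => simp
  | succ e ih =>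
    have hdiv : ∀ i, ∃ c, i < n → b i = C q ^ e * c := fun i =>
      if hi : i < n then (ih (fun j => (pow_dvd_pow _ e.le_succ).trans (h j)) i hi).imp
        fun _ hc _ => hc
      else ⟨0, fun h => absurd h hi⟩
    choose c hc using hdiv
    have hsum : ∀ j, ∑ i ∈ Finset.range n, b i * O.dMulCoeff^[i] u j
        = C q ^ e * ∑ i ∈ Finset.range n, c i * O.dMulCoeff^[i] u j := fun j => by
      rw [Finset.mul_sum]
      exact Finset.sum_congr rfl fun i hi => by rw [hc i (by simpa using hi), mul_assoc]
    have hqe : C q ^ e ≠ 0 := pow_ne_zero _ (prime_C_iff.mpr hq).ne_zero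
    have hc' := O.C_dvd_of_C_dvd_sum hq hJ hu c n fun j =>
      (mul_dvd_mul_iff_left hqe).mp (pow_succ (C q) e ▸ hsum j ▸ h j)
    intro i hi
    rw [hc i hi, pow_succ]
    exact mul_dvd_mul_left _ (hc' i hi)

lemma iterate_σ_of_iterate_symm_mul_eq {k : ℕ} {t x y : R[X]} (h : (⇑O.σ.symm)^[k] t * x = y) :
    t * (⇑O.σ)^[k] x = (⇑O.σ)^[k] y := by
  rw [← h, O.iterate_σ_mul, (Function.LeftInverse.iterate O.σ.apply_symm_apply k) t]

end OreAlg

theorem constant_non_removable_general {R : Type} [CommRing R] [IsDomain R]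
    [IsPrincipalIdealRing R] {A : Type} [Ring A] (O : OreAlg R A)
    (L : A) (hL : L ≠ 0)
    (pc : ℕ → Polynomial R)
    (hpc : ∀ i, O.coeff L i = algebraMap (Polynomial R) (QX R) (pc i))
    (hprim : ∀ s : R, (∀ i, C s ∣ pc i) → IsUnit s)
    (p : R) (hpu : ¬ IsUnit p) (hpd : C p ∣ pc (O.ord L)) :
    ¬ O.Removable L (C p) := by
  rintro ⟨_, P, rfl, hPL, w, v, t, l, -, hcop, ht, hl, hrem⟩
  have inj := IsFractionRing.injective R[X] (QX R)
  obtain rfl : l = pc (O.ord L) := inj (hl.symm.trans (hpc _))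
  have hl0 : pc (O.ord L) ≠ 0 := fun h => O.lc_ne_zero hL (by rw [hl, h, map_zero])
  obtain ⟨q, hq, hqp⟩ := WfDvdMonoid.exists_irreducible_factor hpu
    fun hp => hl0 (zero_dvd_iff.mp (by simpa [hp] using hpd))
  have hπ : Prime (C q) := prime_C_iff.mpr hq.prime
  obtain ⟨J, hJ, hJu⟩ := exists_greatest_not_dvd (N := O.ord L)
    (fun j hj => inj (by rw [← hpc, O.coeff_eq_zero_of_ord_lt hj, map_zero]))
    (not_forall.mp fun h => hπ.not_isUnit (isUnit_C.mpr (hprim q h)))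
  obtain ⟨g, hg, b, hb⟩ := O.exists_integer_multiples_coeff P
  choose c hc using hPL
  have hcoeff : ∀ j, g * c j = ∑ i ∈ Finset.range (O.ord P + 1), b i * O.dMulCoeff^[i] pc j :=
    fun j => inj <| by
      simp only [map_mul, map_sum, ← hc, O.coeff_mul hpc, Finset.mul_sum, hb, mul_assoc]
  have hlead : g * t = b (O.ord P) * (⇑O.σ)^[O.ord P] (pc (O.ord L)) := inj <| by
    rw [map_mul, map_mul, ← ht, O.lc_mul hL hpc, hb, OreAlg.lc, mul_assoc]
  have hrem' := O.iterate_σ_of_iterate_symm_mul_eq hrem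
  rw [O.iterate_σ_mul, O.iterate_σ_mul, O.iterate_σ_C] at hrem'
  have hgb : ∀ e, C q ^ e ∣ g → C q ^ e ∣ b (O.ord P) := fun e he =>
    O.C_pow_dvd_of_C_pow_dvd_sum hq.prime hJ hJu b _ e
      (fun j => hcoeff j ▸ dvd_mul_of_dvd_left he _) _ (Nat.lt_succ_self _)
  have hw := hπ.dvd_of_mul_eq_mul hg hgb (O.iterate_σ_ne_zero hl0) hlead hrem' (map_dvd C hqp)
  exact hπ.not_isUnit (hcop _ (map_dvd C hqp) ((O.C_dvd_iterate_σ_iff _).mp hw))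

/-- if `L ∈ R[x][∂]` has positive order and is `R`-primitive, then
any non-unit `p ∈ R` dividing `lc_∂(L)` is non-removable from `L`: no operator
`P ∈ Q_R(x)[∂]` of any order `k` satisfies `P·L ∈ R[x][∂]` and
`σ^{-k}(lc_∂(P·L)) = (w/(v·p))·lc_∂(L)` with `gcd(p, w) = 1`. -/
theorem constant_non_removable {R : Type} [CommRing R] [IsDomain R]
    [IsPrincipalIdealRing R] {A : Type} [Ring A] (O : OreAlg R A)
    (L : A) (hL : L ≠ 0) (hr : 0 < O.ord L)
    (pc : ℕ → Polynomial R)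
    (hpc : ∀ i, O.coeff L i = algebraMap (Polynomial R) (QX R) (pc i))
    (hprim : ∀ s : R, (∀ i, C s ∣ pc i) → IsUnit s)
    (p : R) (hpu : ¬ IsUnit p) (hpd : C p ∣ pc (O.ord L)) :
    ¬ O.Removable L (C p) :=
  constant_non_removable_general O L hL pc hpc hprim p hpu hpd
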